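/- For all f = (c_j)_{j∈ℕ} and g = (d_j)_{j∈ℕ} in D(N), the series Σ_{j∈ℕ} (−1)^j c_j and Σ_{k∈ℕ} (−1)^k d_k converge absolutely, and ⟨Nf, Φg⟩ − ⟨Φf, Ng⟩ = i⟨f, g⟩ − i·(Σ_{j∈ℕ} (−1)^j c_j)·conj(Σ_{k∈ℕ} (−1)^k d_k). -/

import Mathlib

noncomputable section

open MeasureTheory Complex Real AddCircle ContinuousLinearMap
open scoped ENNReal NNReal

namespace GW

/-- The Hilbert space `H = ℓ²(ℕ, ℂ)`. -/
abbrev H : Type := lp (fun _ : ℕ => ℂ) 2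

instance fact2pi : Fact (0 < 2 * Real.pi) := ⟨by positivity⟩

/-- The circle `𝕋`, realized as `ℝ / 2πℤ`; the point `θ` corresponds to `e^{iθ}`. -/
abbrev Circle2 : Type := AddCircle (2 * Real.pi)

/-- Normalized Lebesgue (Haar) measure `dθ/2π` on the circle. -/
abbrev μT : Measure Circle2 := @AddCircle.haarAddCircle (2 * Real.pi) fact2pi

/-- `L²(𝕋)` with respect to normalized Lebesgue measure. -/
abbrev L2T : Type := MeasureTheory.Lp ℂ 2 μT

/-- Extension of an `ℕ`-indexed coefficient sequence to `ℤ` by zero. -/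
def extz (f : ℕ → ℂ) : ℤ → ℂ := fun n => if 0 ≤ n then f n.toNat else 0

lemma extz_natCast (f : ℕ → ℂ) (n : ℕ) : extz f (n : ℤ) = f n := by
  simp [extz]

lemma extz_memℓp (f : H) : Memℓp (extz ⇑f) 2 := by
  apply memℓp_gen
  have hs : Summable fun n : ℕ => ‖(⇑f) n‖ ^ (2 : ℝ≥0∞).toReal :=
    (lp.memℓp f).summable (by norm_num)
  have h0 : ∀ z : ℤ, z ∉ Set.range ((↑·) : ℕ → ℤ) →
      ‖extz ⇑f z‖ ^ (2 : ℝ≥0∞).toReal = 0 := by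
    intro z hz
    have hneg : ¬ (0 : ℤ) ≤ z := fun h => hz ⟨z.toNat, by simpa using Int.toNat_of_nonneg h⟩
    simp only [extz, if_neg hneg, norm_zero]
    rw [Real.zero_rpow (by norm_num)]
  have hinj : Function.Injective ((↑·) : ℕ → ℤ) := fun a b h => by simpa using h
  refine (hinj.summable_iff h0).mp ?_
  refine hs.congr fun n => ?_
  simp [Function.comp, extz_natCast]

/-- The zero-extension `ℓ²(ℕ,ℂ) → ℓ²(ℤ,ℂ)`. -/
def extlp (f : H) : lp (fun _ : ℤ => ℂ) 2 := ⟨extz ⇑f, extz_memℓp f⟩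

/-- `J` as a plain function: send `(c_n)_{n∈ℕ}` to `Σ_{n∈ℕ} c_n e^{inθ}` in `L²(𝕋)`,
via the Fourier Hilbert basis of `L²(𝕋)`. -/
def Jmap (f : H) : L2T := (@fourierBasis (2 * Real.pi) fact2pi).repr.symm (extlp f)

lemma extlp_add (f g : H) : extlp (f + g) = extlp f + extlp g := by
  apply Subtype.ext
  funext n
  show extz (⇑(f + g)) n = extz ⇑f n + extz ⇑g n
  rcases le_or_gt 0 n with h | h
  · simp only [extz, if_pos h]
    exact congrFun (lp.coeFn_add f g) n.toNat
  · simp [extz, if_neg (not_le.mpr h)]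

lemma extlp_smul (c : ℂ) (f : H) : extlp (c • f) = c • extlp f := by
  apply Subtype.ext
  funext n
  show extz (⇑(c • f)) n = c • extz ⇑f n
  rcases le_or_gt 0 n with h | h
  · simp only [extz, if_pos h]
    rw [lp.coeFn_smul]
    rfl
  · simp [extz, if_neg (not_le.mpr h)]

/-- `J` as a linear map. -/
def Jlin : H →ₗ[ℂ] L2T where
  toFun := Jmap
  map_add' f g := show Jmap (f + g) = Jmap f + Jmap g by
    unfold Jmap; rw [extlp_add, map_add]
  map_smul' c f := show Jmap (c • f) = c • Jmap f by
    unfold Jmap; rw [extlp_smul, _root_.map_smul]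

lemma norm_extlp (f : H) : ‖extlp f‖ = ‖f‖ := by
  rw [lp.norm_eq_tsum_rpow (by norm_num : 0 < (2 : ℝ≥0∞).toReal) (extlp f),
    lp.norm_eq_tsum_rpow (by norm_num : 0 < (2 : ℝ≥0∞).toReal) f]
  congr 1
  have hinj : Function.Injective ((↑·) : ℕ → ℤ) := fun a b h => by simpa using h
  have h0 : ∀ z, z ∉ Set.range ((↑·) : ℕ → ℤ) →
      ‖extlp f z‖ ^ (2 : ℝ≥0∞).toReal = 0 := by
    intro z hz
    have hneg : ¬ (0 : ℤ) ≤ z := fun h => hz ⟨z.toNat, by simpa using Int.toNat_of_nonneg h⟩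
    show ‖extz ⇑f z‖ ^ (2 : ℝ≥0∞).toReal = 0
    simp only [extz, if_neg hneg, norm_zero]
    rw [Real.zero_rpow (by norm_num)]
  have hsupp : (Function.support fun z => ‖extlp f z‖ ^ (2 : ℝ≥0∞).toReal) ⊆
      Set.range ((↑·) : ℕ → ℤ) := by
    intro z hz
    by_contra h
    exact hz (h0 z h)
  have key := hinj.tsum_eq (f := fun z => ‖extlp f z‖ ^ (2 : ℝ≥0∞).toReal) hsupp
  rw [← key]
  exact tsum_congr fun n => by
    show ‖extz ⇑f (n : ℤ)‖ ^ (2 : ℝ≥0∞).toReal = _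
    rw [extz_natCast]

/-- The isometric embedding `J : H → L²(𝕋)` as a continuous linear map; it maps the `n`-th
standard basis vector of `ℓ²(ℕ,ℂ)` to `θ ↦ e^{inθ}`, `n ∈ ℕ`. -/
def JH : H →L[ℂ] L2T :=
  LinearMap.mkContinuousOfExistsBound Jlin
    ⟨1, fun f => by
      simp only [Jlin, LinearMap.coe_mk, AddHom.coe_mk, one_mul, Jmap]
      rw [LinearIsometryEquiv.norm_map]
      exact le_of_eq (norm_extlp f)⟩

end GW

namespace GW

/-- The argument function on the circle: `e^{iθ} ↦ θ` with `θ ∈ (−π, π]`, as a `ℂ`-valued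
function. -/
def argFun : Circle2 → ℂ :=
  fun x => (((AddCircle.measurableEquivIoc (2 * Real.pi) (-Real.pi) x : Set.Ioc (-Real.pi) (-Real.pi + 2 * Real.pi)) : ℝ) : ℂ)

lemma argFun_memℒp : MemLp argFun ⊤ μT := by
  apply memLp_top_of_bound (C := Real.pi)
  · exact (Complex.measurable_ofReal.comp (measurable_subtype_coe.comp
      (AddCircle.measurableEquivIoc (2 * Real.pi) (-Real.pi)).measurable)).aestronglyMeasurable
  · refine Filter.Eventually.of_forall fun x => ?_
    have h := (AddCircle.measurableEquivIoc (2 * Real.pi) (-Real.pi) x).2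
    have h1 : -Real.pi < ((AddCircle.measurableEquivIoc (2 * Real.pi) (-Real.pi) x : Set.Ioc (-Real.pi) (-Real.pi + 2 * Real.pi)) : ℝ) := h.1
    have h2 := h.2
    rw [argFun, Complex.norm_real, Real.norm_eq_abs, abs_le]
    constructor
    · linarith
    · linarith

lemma mul_memℒp (φ : Circle2 → ℂ) (hφ : MemLp φ ⊤ μT) (f : L2T) : MemLp (φ • ⇑f) 2 μT :=
  (Lp.memLp f).smul hφ

lemma mul_toLp_add (φ : Circle2 → ℂ) (hφ : MemLp φ ⊤ μT) (f g : L2T) :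
    (mul_memℒp φ hφ (f + g)).toLp (φ • ⇑(f + g)) =
      (mul_memℒp φ hφ f).toLp (φ • ⇑f) + (mul_memℒp φ hφ g).toLp (φ • ⇑g) := by
  rw [MemLp.toLp_congr (mul_memℒp φ hφ (f + g)) ((mul_memℒp φ hφ f).add (mul_memℒp φ hφ g))
    ((Lp.coeFn_add f g).mono fun x hx => by
      simp only [Pi.smul_apply', hx, Pi.add_apply, smul_add])]
  exact MemLp.toLp_add _ _

lemma mul_toLp_smul (φ : Circle2 → ℂ) (hφ : MemLp φ ⊤ μT) (c : ℂ) (f : L2T) :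
    (mul_memℒp φ hφ (c • f)).toLp (φ • ⇑(c • f)) = c • (mul_memℒp φ hφ f).toLp (φ • ⇑f) := by
  rw [MemLp.toLp_congr (mul_memℒp φ hφ (c • f)) ((mul_memℒp φ hφ f).const_smul c)
    ((Lp.coeFn_smul c f).mono fun x hx => by
      rw [Pi.smul_apply', hx, Pi.smul_apply, Pi.smul_apply, Pi.smul_apply', smul_comm])]
  exact MemLp.toLp_const_smul c _

/-- Multiplication by a bounded measurable function, as a linear map on `L²(𝕋)`. -/
def mulLin (φ : Circle2 → ℂ) (hφ : MemLp φ ⊤ μT) : L2T →ₗ[ℂ] L2T where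
  toFun f := (mul_memℒp φ hφ f).toLp (φ • ⇑f)
  map_add' f g := mul_toLp_add φ hφ f g
  map_smul' c f := mul_toLp_smul φ hφ c f

/-- Multiplication by a bounded measurable function, as a bounded operator on `L²(𝕋)`. -/
def mulCLM (φ : Circle2 → ℂ) (hφ : MemLp φ ⊤ μT) : L2T →L[ℂ] L2T :=
  LinearMap.mkContinuousOfExistsBound (mulLin φ hφ)
    ⟨(eLpNorm φ ⊤ μT).toReal, fun f => by
      simp only [mulLin, LinearMap.coe_mk, AddHom.coe_mk]
      rw [Lp.norm_toLp, Lp.norm_def]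
      rw [← ENNReal.toReal_mul]
      apply ENNReal.toReal_mono
      · exact ENNReal.mul_ne_top hφ.eLpNorm_ne_top (Lp.memLp f).eLpNorm_ne_top
      · exact eLpNorm_smul_le_mul_eLpNorm (p := ⊤) (q := 2) (Lp.memLp f).1 hφ.1⟩

/-- The Garrison–Wong phase operator `Φ = J* ∘ M_arg ∘ J` on `H`. -/
def Phi : H →L[ℂ] H :=
  (ContinuousLinearMap.adjoint JH) ∘L (mulCLM argFun argFun_memℒp) ∘L JH

/-- The domain of the number operator: `{f ∈ H : Σ n² |c_n|² < ∞}`. -/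
def domN : Set H := {f : H | Summable fun n : ℕ => (n : ℝ) ^ 2 * ‖f n‖ ^ 2}

lemma Nop_memℓp {f : H} (hf : f ∈ domN) : Memℓp (fun n : ℕ => (n : ℂ) * f n) 2 := by
  apply memℓp_gen
  refine Summable.congr hf fun n => ?_
  have h2 : ((2 : ℝ≥0∞)).toReal = ((2 : ℕ) : ℝ) := by norm_num
  rw [h2, Real.rpow_natCast]
  simp [norm_mul, mul_pow]

/-- The number operator `N`, defined on its maximal domain `domN`: `(Nf)_n = n·c_n`. -/
def Nop (f : H) (hf : f ∈ domN) : H := ⟨fun n : ℕ => (n : ℂ) * f n, Nop_memℓp hf⟩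

/-- The standard orthonormal basis `(e_n)` of `H`. -/
def eH (n : ℕ) : H := lp.single 2 n (1 : ℂ)

lemma norm_exp_mul (x : ℝ) (c : ℂ) : ‖Complex.exp ((x : ℂ) * Complex.I) * c‖ = ‖c‖ := by
  rw [norm_mul, Complex.norm_exp_ofReal_mul_I, one_mul]

lemma U_memℓp (t : ℝ) (f : H) : Memℓp (fun n : ℕ => Complex.exp (((n * t : ℝ) : ℂ) * Complex.I) * f n) 2 := by
  apply memℓp_gen
  refine Summable.congr ((lp.memℓp f).summable (by norm_num)) fun n => ?_
  rw [norm_exp_mul]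

/-- The unitary group `U_t = e^{itN}`: `(U_t f)_n = e^{int} f_n`, as a linear map. -/
def Ulin (t : ℝ) : H →ₗ[ℂ] H where
  toFun f := ⟨fun n : ℕ => Complex.exp (((n * t : ℝ) : ℂ) * Complex.I) * f n, U_memℓp t f⟩
  map_add' f g := by
    apply Subtype.ext
    funext n
    show Complex.exp _ * (⇑(f + g)) n = _
    rw [lp.coeFn_add]
    show Complex.exp _ * (f n + g n) =
      Complex.exp _ * f n + Complex.exp _ * g n
    ring
  map_smul' c f := by
    apply Subtype.ext
    funext n
    show Complex.exp _ * (⇑(c • f)) n = _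
    rw [lp.coeFn_smul]
    show Complex.exp _ * (c * f n) = c * (Complex.exp _ * f n)
    ring

/-- The unitary group `U_t = e^{itN}`: `(U_t f)_n = e^{int} f_n`. -/
def U (t : ℝ) : H →L[ℂ] H :=
  LinearMap.mkContinuousOfExistsBound (Ulin t)
    ⟨1, fun f => by
      simp only [Ulin, LinearMap.coe_mk, AddHom.coe_mk, one_mul]
      apply le_of_eq
      rw [lp.norm_eq_tsum_rpow (by norm_num : 0 < (2 : ℝ≥0∞).toReal),
        lp.norm_eq_tsum_rpow (by norm_num : 0 < (2 : ℝ≥0∞).toReal) f]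
      congr 1
      refine tsum_congr fun n => ?_
      show ‖Complex.exp (((n * t : ℝ) : ℂ) * Complex.I) * f n‖ ^ (2 : ℝ≥0∞).toReal = _
      rw [norm_exp_mul]⟩

/-- The indicator function of a subset of the circle, as a `ℂ`-valued function. -/
def indFun (B : Set Circle2) : Circle2 → ℂ := Set.indicator B (fun _ => (1 : ℂ))

lemma indFun_memℒp {B : Set Circle2} (hB : MeasurableSet B) : MemLp (indFun B) ⊤ μT := by
  apply memLp_top_of_bound (C := 1)
  · exact (aestronglyMeasurable_const.indicator hB)
  · refine Filter.Eventually.of_forall fun x => ?_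
    by_cases h : x ∈ B <;> simp [indFun, h]

open scoped Classical in
/-- The POVM `Q(B) = J* ∘ M_{1_B} ∘ J` obtained by compressing multiplication by the
indicator of `B` to `H` (defined to be `0` for non-measurable `B`). -/
def Qop (B : Set Circle2) : H →L[ℂ] H :=
  if h : MeasurableSet B then
    (ContinuousLinearMap.adjoint JH) ∘L (mulCLM (indFun B) (indFun_memℒp h)) ∘L JH
  else 0



/-
In the basis `(e_n)`, `Φ` is the Toeplitz matrix `⟨e_n, Φ e_m⟩ = a_{n-m}` of the Fourier
coefficients of the sawtooth `θ ↦ θ`: `a_0 = 0` and `a_k = i (-1)^k / k`, the boundary term of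
the integration by parts coming from the jump `2π` at `θ = π`. Hence
`(n - m) a_{n-m} = i (-1)^{n+m} - i δ_{nm}`, i.e. formally `[N, Φ] = i (|u⟩⟨u| - 1)` with the
non-normalizable `u = ((-1)^n)`; the pairings with `u` converge absolutely since
`2|c_n| ≤ 1/n² + n²|c_n|²`. The formula is proved first for `f = e_n`, expanding `g` in
coordinates, and then for general `f` by expanding `f`, so no two summations are ever
interchanged.
-/

lemma summable_norm_of_summable_sq_mul_norm_sq {E : Type*} [SeminormedAddCommGroup E]
    {f : ℕ → E} (hf : Summable fun n : ℕ => (n : ℝ) ^ 2 * ‖f n‖ ^ 2) :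
    Summable fun n => ‖f n‖ := by
  refine .of_norm_bounded_eventually
    (((Real.summable_one_div_nat_pow.2 one_lt_two).add hf).div_const 2) ?_
  filter_upwards [Set.Finite.compl_mem_cofinite (Set.finite_singleton 0)] with n hn
  have hn : (0 : ℝ) < n := by simpa [Nat.pos_iff_ne_zero] using hn
  rw [norm_norm, le_div_iff₀ two_pos]
  have := two_mul_le_add_sq (1 / (n : ℝ)) (n * ‖f n‖)
  field_simp at this ⊢
  linarith

lemma fourierCoeffOn_const_one {a b : ℝ} (hab : a < b) {k : ℤ} (hk : k ≠ 0) :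
    fourierCoeffOn hab (fun _ => (1 : ℂ)) k = 0 := by
  have := Fact.mk (sub_pos.2 hab)
  have h := congrFun (fourierCoeff_fourier (T := b - a) 0) k
  rw [Pi.single_eq_of_ne hk] at h
  rw [fourierCoeffOn, ← h]
  congr 1
  funext x
  simp [AddCircle.liftIoc]

lemma fourierCoeff_argFun (k : ℤ) :
    fourierCoeff argFun k = if k = 0 then 0 else I * (-1) ^ k / k := by
  have hab : -π < -π + 2 * π := by linarith [Real.pi_pos]
  rw [show argFun = AddCircle.liftIoc (2 * π) (-π) (fun t : ℝ => (t : ℂ)) from rfl,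
    fourierCoeff_liftIoc_eq]
  split_ifs with hk
  · subst hk
    have h : ∫ t in -π..-π + 2 * π, (t : ℂ) = 0 := by
      rw [show (0 : ℂ) = ((((-π + 2 * π) ^ 2 - (-π) ^ 2) / 2 : ℝ) : ℂ) by push_cast; ring,
        ← integral_id]
      exact intervalIntegral.integral_ofReal
    simp only [fourierCoeffOn_eq_integral, neg_zero, fourier_zero, one_smul, h, smul_zero]
  · have hderiv : ∀ x ∈ Set.uIcc (-π) (-π + 2 * π),
        HasDerivAt (fun t : ℝ => (t : ℂ)) 1 x := fun x _ => (hasDerivAt_id x).ofReal_comp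
    have hexp : ∀ z : ℂ, z = k * (π * I) → cexp z = (-1) ^ k := by
      rintro z rfl
      rw [Complex.exp_int_mul, Complex.exp_pi_mul_I]
    have hπ : (π : ℂ) ≠ 0 := ofReal_ne_zero.2 Real.pi_ne_zero
    have hk' : (k : ℂ) ≠ 0 := Int.cast_ne_zero.2 hk
    rw [fourierCoeffOn_of_hasDerivAt hab hk hderiv intervalIntegrable_const,
      fourierCoeffOn_const_one hab hk, fourier_coe_apply,
      hexp _ (by push_cast; field_simp; ring)]
    push_cast
    field_simp
    linear_combination (-2 * (-1) ^ k) * I_sq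

lemma conj_fourierCoeff_argFun (k : ℤ) :
    starRingEnd ℂ (fourierCoeff argFun k) = fourierCoeff argFun (-k) := by
  rcases eq_or_ne k 0 with rfl | hk
  · simp [fourierCoeff_argFun]
  · simp [fourierCoeff_argFun, hk, zpow_neg, ← inv_zpow, neg_div, div_neg]

lemma natCast_sub_mul_fourierCoeff_argFun (n m : ℕ) :
    ((n : ℂ) - m) * fourierCoeff argFun ((m : ℤ) - n) =
      I * (if m = n then 1 else 0) - I * (-1) ^ n * (-1) ^ m := by
  rcases eq_or_ne m n with rfl | hmn
  · rw [mul_assoc, ← mul_pow]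
    simp
  · have hmnℤ : (m : ℤ) - n ≠ 0 := sub_ne_zero.2 (by exact_mod_cast hmn)
    have hmnℂ : (m : ℂ) - n ≠ 0 := sub_ne_zero.2 (by exact_mod_cast hmn)
    have hsign : (-1 : ℂ) ^ ((m : ℤ) - n) = (-1) ^ n * (-1) ^ m := by
      rw [zpow_sub₀ (by norm_num), zpow_natCast, zpow_natCast, div_eq_iff (by simp),
        mul_comm, ← mul_assoc, ← mul_pow]
      simp
    rw [fourierCoeff_argFun, if_neg hmnℤ, if_neg hmn, hsign]
    push_cast
    field_simp
    ring

lemma inner_fourierLp_mulCLM (φ : Circle2 → ℂ) (hφ : MemLp φ ⊤ μT) (n m : ℤ) :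
    inner ℂ (fourierLp 2 n) (mulCLM φ hφ (fourierLp 2 m)) = fourierCoeff φ (n - m) := by
  rw [L2.inner_def, fourierCoeff]
  refine integral_congr_ae ?_
  filter_upwards [coeFn_fourierLp 2 n, coeFn_fourierLp 2 m,
    (mul_memℒp φ hφ (fourierLp 2 m)).coeFn_toLp] with x hn hm hφm
  change inner ℂ _ ((mul_memℒp φ hφ (fourierLp 2 m)).toLp _ x) = _
  rw [hφm, Pi.smul_apply', hn, hm, RCLike.inner_apply, ← fourier_neg, neg_sub, sub_eq_add_neg,
    fourier_add, smul_eq_mul, smul_eq_mul]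
  ring

lemma extlp_eH (n : ℕ) : extlp (eH n) = lp.single 2 (n : ℤ) 1 := by
  ext z
  simp only [extlp, extz, eH, lp.single_apply, Pi.single_apply]
  split_ifs <;> first | rfl | (exfalso; omega)

lemma JH_eH (n : ℕ) : JH (eH n) = fourierLp 2 (n : ℤ) := by
  change fourierBasis.repr.symm (extlp (eH n)) = _
  rw [extlp_eH, ← coe_fourierBasis (T := 2 * π), ← (fourierBasis (T := 2 * π)).repr_self,
    LinearIsometryEquiv.symm_apply_apply]

lemma inner_eH (n : ℕ) (x : H) : inner ℂ (eH n) x = x n := by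
  simp [eH, lp.inner_single_left]

lemma hasSum_apply_eH {E : Type*} [NormedAddCommGroup E] [NormedSpace ℂ E] (L : H →L[ℂ] E)
    (x : H) : HasSum (fun n => x n • L (eH n)) (L x) := by
  simpa only [eH, ← map_smul, ← lp.single_smul, smul_eq_mul, mul_one]
    using L.hasSum (lp.hasSum_single ENNReal.ofNat_ne_top x)

lemma inner_eH_Phi_eH (n m : ℕ) :
    inner ℂ (eH n) (Phi (eH m)) = fourierCoeff argFun ((n : ℤ) - m) := by
  rw [Phi, comp_apply, comp_apply, adjoint_inner_right, JH_eH, JH_eH, inner_fourierLp_mulCLM]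

lemma Phi_eH_apply (n m : ℕ) : Phi (eH n) m = fourierCoeff argFun ((m : ℤ) - n) := by
  rw [← inner_eH, inner_eH_Phi_eH]

lemma hasSum_Phi_apply (g : H) (n : ℕ) :
    HasSum (fun m => g m * fourierCoeff argFun ((n : ℤ) - m)) (Phi g n) := by
  simpa only [comp_apply, innerSL_apply_apply, inner_eH, Phi_eH_apply, smul_eq_mul]
    using hasSum_apply_eH ((innerSL ℂ (eH n)).comp Phi) g

lemma Nop_apply {f : H} (hf : f ∈ domN) (n : ℕ) : Nop f hf n = n * f n := rfl

lemma commutator_formula_eH {g : H} (hg : g ∈ domN) {S : ℂ}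
    (hS : HasSum (fun k => (-1) ^ k * g k) S) (n : ℕ) :
    n * starRingEnd ℂ (Phi g n) - inner ℂ (Nop g hg) (Phi (eH n)) =
      I * starRingEnd ℂ (g n) - I * (-1) ^ n * starRingEnd ℂ S := by
  have hPhi : HasSum (fun m : ℕ => starRingEnd ℂ (g m) * fourierCoeff argFun ((m : ℤ) - n))
      (starRingEnd ℂ (Phi g n)) := by
    simpa [conj_fourierCoeff_argFun] using Complex.hasSum_conj'.2 (hasSum_Phi_apply g n)
  have hNPhi : HasSum
      (fun m : ℕ => fourierCoeff argFun ((m : ℤ) - n) * (m * starRingEnd ℂ (g m)))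
      (inner ℂ (Nop g hg) (Phi (eH n))) := by
    simpa [Phi_eH_apply, Nop_apply] using lp.hasSum_inner (𝕜 := ℂ) (Nop g hg) (Phi (eH n))
  have hδ : HasSum (fun m : ℕ => starRingEnd ℂ (g m) * if m = n then 1 else 0)
      (starRingEnd ℂ (g n)) := by
    simpa using hasSum_single (f := fun m : ℕ => starRingEnd ℂ (g m) * if m = n then 1 else 0) n
      fun m hm => by simp [hm]
  have hL := (hPhi.mul_left (n : ℂ)).sub hNPhi
  have hR := (hδ.mul_left I).sub ((Complex.hasSum_conj'.2 hS).mul_left (I * (-1) ^ n))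
  refine hL.unique (hR.congr_fun fun m => ?_)
  simp only [map_mul, map_pow, map_neg, map_one]
  linear_combination starRingEnd ℂ (g m) * natCast_sub_mul_fourierCoeff_argFun n m

/-- Mathlib's `inner` is conjugate-linear in its first argument, so the paper's `⟨x, y⟩` is
`inner ℂ y x`. -/
theorem inner_commutator_formula (f g : H) (hf : f ∈ domN) (hg : g ∈ domN) :
    Summable (fun j : ℕ => ‖(-1 : ℂ) ^ j * f j‖) ∧
    Summable (fun k : ℕ => ‖(-1 : ℂ) ^ k * g k‖) ∧
    (inner ℂ (Phi g) (Nop f hf) : ℂ) - (inner ℂ (Nop g hg) (Phi f) : ℂ) =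
      Complex.I * (inner ℂ g f : ℂ) -
        Complex.I * (∑' j : ℕ, (-1 : ℂ) ^ j * f j) *
          (starRingEnd ℂ) (∑' k : ℕ, (-1 : ℂ) ^ k * g k) := by
  have hfsum : Summable (fun j : ℕ => ‖(-1 : ℂ) ^ j * f j‖) :=
    (summable_norm_of_summable_sq_mul_norm_sq hf).congr fun j => by simp
  have hgsum : Summable (fun k : ℕ => ‖(-1 : ℂ) ^ k * g k‖) :=
    (summable_norm_of_summable_sq_mul_norm_sq hg).congr fun j => by simp
  refine ⟨hfsum, hgsum, ?_⟩
  have hN := lp.hasSum_inner (𝕜 := ℂ) (Phi g) (Nop f hf)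
  have hPhi := hasSum_apply_eH ((innerSL ℂ (Nop g hg)).comp Phi) f
  simp only [comp_apply, innerSL_apply_apply, smul_eq_mul] at hPhi
  have hRHS := ((lp.hasSum_inner (𝕜 := ℂ) g f).mul_left I).sub
    ((Summable.of_norm hfsum).hasSum.mul_left (I * starRingEnd ℂ (∑' k, (-1) ^ k * g k)))
  rw [(hN.sub hPhi).unique (hRHS.congr_fun fun n => ?_)]
  · ring
  · simp only [RCLike.inner_apply, Nop_apply]
    linear_combination f n * commutator_formula_eH hg (Summable.of_norm hgsum).hasSum n

end GW
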